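/- arXiv:math/0302048 — 3 statements merged into one kernel-verified Lean document; each statement's English description precedes it below -/
import Mathlib

section
/- Let R be a reduced irreducible root system with base Π, and let S ⊆ Π be a connected subset with ε_S the highest root of R^S = R ∩ ℤS. Then T = {α ∈ R^S : ⟨α, ε_S^∨⟩ = 0} is a root system in the subspace it spans, and {α ∈ S : ⟨α, ε_S^∨⟩ = 0} is a base of T. -/
open Finset Module

open scoped Classical

/-- A reduced crystallographic root system in the `k`-vector space `V`, recorded through
the finite set `roots` of roots, the coroot linear forms `corootForm α = ⟨·, α^∨⟩`, and
the integer Cartan pairing `pairInt β α = ⟨β, α^∨⟩ ∈ ℤ` (meaningful when `α, β` are roots). -/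
structure RootSystemData (k V : Type*) [Field k] [CharZero k]
    [AddCommGroup V] [Module k V] where
  /-- the (finite) set of roots -/
  roots : Finset V
  /-- `corootForm α` is the linear form `⟨·, α^∨⟩` associated to the coroot of a root `α` -/
  corootForm : V → V →ₗ[k] k
  /-- the integer `⟨β, α^∨⟩`, recorded as `pairInt β α` -/
  pairInt : V → V → ℤ
  ne_zero : ∀ α ∈ roots, α ≠ (0 : V)
  span_eq_top : Submodule.span k (roots : Set V) = ⊤
  pair_compat : ∀ α ∈ roots, ∀ β ∈ roots, ((pairInt β α : ℤ) : k) = corootForm α β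
  pair_self : ∀ α ∈ roots, pairInt α α = 2
  reflect_mem : ∀ α ∈ roots, ∀ β ∈ roots, β - pairInt β α • α ∈ roots
  reduced : ∀ α ∈ roots, ∀ c : k, c • α ∈ roots → c = 1 ∨ c = -1

namespace RootSystemData

variable {k V : Type*} [Field k] [CharZero k] [AddCommGroup V] [Module k V]
variable (P : RootSystemData k V)

/-- A base (set of simple roots) of the root system: a linearly independent set of roots
such that every root is a nonnegative or nonpositive integral combination of its elements. -/
structure IsBase (B : Finset V) : Prop where
  subset : B ⊆ P.roots
  indep : LinearIndependent k (fun b : B => (b : V))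
  pos_or_neg : ∀ α ∈ P.roots,
    α ∈ AddSubmonoid.closure (B : Set V) ∨ -α ∈ AddSubmonoid.closure (B : Set V)

/-- The positive roots `R₊` with respect to a base `B`. -/
noncomputable def posRoots (B : Finset V) : Finset V :=
  P.roots.filter fun α => α ∈ AddSubmonoid.closure (B : Set V)

/-- `R^S = R ∩ ℤS`. -/
noncomputable def rootsOf (S : Finset V) : Finset V :=
  P.roots.filter fun α => α ∈ AddSubgroup.closure (S : Set V)

/-- `R₊^S = R ∩ ℕS`. -/
noncomputable def posRootsOf (S : Finset V) : Finset V :=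
  P.roots.filter fun α => α ∈ AddSubmonoid.closure (S : Set V)

/-- Two simple roots are linked in the Dynkin diagram of `S ⊆ Δ` when they can be joined
by a chain in `S` of consecutively non-orthogonal elements. -/
def Linked (S : Finset V) : V → V → Prop :=
  Relation.ReflTransGen fun a b => a ∈ S ∧ b ∈ S ∧ P.pairInt a b ≠ 0

/-- A subset of a base is connected if its Dynkin diagram is connected (and nonempty). -/
def IsConnected (S : Finset V) : Prop :=
  S.Nonempty ∧ ∀ a ∈ S, ∀ b ∈ S, P.Linked S a b

/-- `ε` is the highest root of `R^S`: a positive root of `R^S` such that `ε - α ∈ ℕS`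
for every root `α ∈ R^S`. -/
def IsHighestRoot (S : Finset V) (ε : V) : Prop :=
  ε ∈ P.posRootsOf S ∧ ∀ α ∈ P.rootsOf S, ε - α ∈ AddSubmonoid.closure (S : Set V)

/-- The highest root `ε_S` of `R^S` (junk value `0` if it does not exist). -/
noncomputable def highestRoot (S : Finset V) : V :=
  if h : ∃ ε, P.IsHighestRoot S ε then h.choose else 0

/-- The connected component of `a` in the Dynkin diagram of `S`. -/
noncomputable def component (S : Finset V) (a : V) : Finset V :=
  S.filter fun b => P.Linked S a b

/-- The connected components of the Dynkin diagram of `S`. -/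
noncomputable def components (S : Finset V) : Finset (Finset V) :=
  S.image fun a => P.component S a

/-- `{α ∈ S : ⟨α, ε_S^∨⟩ = 0}`. -/
noncomputable def zeroPart (S : Finset V) : Finset V :=
  S.filter fun a => P.pairInt a (P.highestRoot S) = 0

/-- Fuel-based auxiliary recursion for the cascade `𝒦(S)`; for an actual root system the
recursion terminates in at most `card S` steps, so fuel `card S + 1` computes `𝒦(S)`. -/
noncomputable def cascadeAux : ℕ → Finset V → Finset (Finset V)
  | 0, _ => ∅
  | n + 1, S => (P.components S).biUnion fun C => insert C (cascadeAux n (P.zeroPart C))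

/-- The cascade `𝒦(S)`, defined recursively by `𝒦(∅) = ∅`,
`𝒦(S) = 𝒦(S₁) ∪ ⋯ ∪ 𝒦(S_r)` if `S` has connected components `S₁, …, S_r`, and
`𝒦(S) = {S} ∪ 𝒦({α ∈ S : ⟨α, ε_S^∨⟩ = 0})` if `S` is connected. -/
noncomputable def cascade (S : Finset V) : Finset (Finset V) :=
  P.cascadeAux (S.card + 1) S

/-- `Γ^K = {α ∈ R^K : ⟨α, ε_K^∨⟩ > 0}`. -/
noncomputable def gamma (K : Finset V) : Finset V :=
  (P.rootsOf K).filter fun α => 0 < P.pairInt α (P.highestRoot K)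

end RootSystemData

variable {k V : Type*} [Field k] [CharZero k] [AddCommGroup V] [Module k V]

namespace RootSystemData

/-- `{α ∈ R^S : ⟨α, ε^∨⟩ = 0}`. -/
noncomputable def orthPart (P : RootSystemData k V) (S : Finset V) (ε : V) : Finset V :=
  (P.rootsOf S).filter fun a => P.pairInt a ε = 0

end RootSystemData

section AuxHelpers

private lemma natClosure_iff (S : Finset V) (x : V) :
    x ∈ AddSubmonoid.closure (S : Set V) ↔ ∃ f : V → ℕ, x = ∑ s ∈ S, f s • s := by
  classical
  constructor
  · intro hx
    let N : AddSubmonoid V :=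
      { carrier := {x | ∃ f : V → ℕ, x = ∑ s ∈ S, f s • s}
        zero_mem' := ⟨0, by simp⟩
        add_mem' := by
          rintro x y ⟨f, rfl⟩ ⟨g, rfl⟩
          exact ⟨f + g, by simp [add_smul, Finset.sum_add_distrib]⟩ }
    have hle : AddSubmonoid.closure (S : Set V) ≤ N := by
      refine AddSubmonoid.closure_le.mpr ?_
      intro s hs
      rw [Finset.mem_coe] at hs
      exact ⟨fun v => if v = s then 1 else 0, by simp [ite_smul, Finset.sum_ite_eq', hs]⟩
    exact hle hx
  · rintro ⟨f, rfl⟩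
    exact AddSubmonoid.sum_mem _ fun s hs =>
      AddSubmonoid.nsmul_mem _ (AddSubmonoid.subset_closure (Finset.mem_coe.mpr hs)) (f s)

private lemma intClosure_iff (S : Finset V) (x : V) :
    x ∈ AddSubgroup.closure (S : Set V) ↔ ∃ f : V → ℤ, x = ∑ s ∈ S, f s • s := by
  classical
  constructor
  · intro hx
    let N : AddSubgroup V :=
      { carrier := {x | ∃ f : V → ℤ, x = ∑ s ∈ S, f s • s}
        zero_mem' := ⟨0, by simp⟩
        add_mem' := by
          rintro x y ⟨f, rfl⟩ ⟨g, rfl⟩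
          exact ⟨f + g, by simp [add_smul, Finset.sum_add_distrib]⟩
        neg_mem' := by
          rintro x ⟨f, rfl⟩
          exact ⟨fun v => -f v, by simp [neg_smul]⟩ }
    have hle : AddSubgroup.closure (S : Set V) ≤ N := by
      refine (AddSubgroup.closure_le _).mpr ?_
      intro s hs
      rw [Finset.mem_coe] at hs
      exact ⟨fun v => if v = s then 1 else 0, by simp [ite_smul, Finset.sum_ite_eq', hs]⟩
    exact hle hx
  · rintro ⟨f, rfl⟩
    exact AddSubgroup.sum_mem _ fun s hs =>
      AddSubgroup.zsmul_mem _ (AddSubgroup.subset_closure (Finset.mem_coe.mpr hs)) (f s)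

private lemma coeff_eq_zero {Δ : Finset V}
    (hind : LinearIndependent k (fun b : Δ => (b : V)))
    (f : V → k) (h : ∑ d ∈ Δ, f d • d = 0) : ∀ d ∈ Δ, f d = 0 := by
  have key := linearIndependent_iff'.mp hind Finset.univ (fun i => f i) ?_
  · exact fun d hd => key ⟨d, hd⟩ (Finset.mem_univ _)
  · rw [Finset.univ_eq_attach]
    rw [show (∑ i ∈ Δ.attach, f (i : V) • (i : V)) = ∑ d ∈ Δ, f d • d from
      Finset.sum_attach Δ (fun d => f d • d)]
    exact h

private lemma nat_coeff_eq_zero {Δ : Finset V}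
    (hind : LinearIndependent k (fun b : Δ => (b : V))) {S : Finset V}
    (hS : S ⊆ Δ) (f : V → ℕ) (h : ∑ s ∈ S, f s • s = 0) : ∀ s ∈ S, f s = 0 := by
  classical
  have h0 : ∑ d ∈ Δ, (if d ∈ S then (f d : k) else 0) • d = 0 := by
    rw [← Finset.sum_subset hS (fun x _ hx => by simp [hx])]
    rw [Finset.sum_congr rfl fun s hs => by rw [if_pos hs, Nat.cast_smul_eq_nsmul]]
    exact h
  intro s hs
  have := coeff_eq_zero hind (fun v => if v ∈ S then (f v : k) else 0) h0 s (hS hs)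
  simp only [if_pos hs] at this
  exact_mod_cast this

private lemma sep_closure {Δ : Finset V}
    (hind : LinearIndependent k (fun b : Δ => (b : V))) {S : Finset V} (hS : S ⊆ Δ)
    {x : V} (h1 : x ∈ AddSubmonoid.closure (Δ : Set V))
    (h2 : x ∈ AddSubgroup.closure (S : Set V)) :
    x ∈ AddSubmonoid.closure (S : Set V) := by
  classical
  obtain ⟨f, hf⟩ := (natClosure_iff Δ x).mp h1
  obtain ⟨g, hg⟩ := (intClosure_iff S x).mp h2
  have e1 : ∑ d ∈ Δ, ((f d : k)) • d = x := by
    rw [Finset.sum_congr rfl fun d _ => by rw [Nat.cast_smul_eq_nsmul]]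
    exact hf.symm
  have e2 : ∑ d ∈ Δ, (if d ∈ S then (g d : k) else 0) • d = x := by
    rw [← Finset.sum_subset hS (fun x _ hx => by simp [hx])]
    rw [Finset.sum_congr rfl fun s hs => by rw [if_pos hs, Int.cast_smul_eq_zsmul]]
    exact hg.symm
  have h0 : ∑ d ∈ Δ, ((f d : k) - if d ∈ S then (g d : k) else 0) • d = 0 := by
    simp only [sub_smul, Finset.sum_sub_distrib, e1, e2, sub_self]
  have hz : ∀ d ∈ Δ, d ∉ S → f d = 0 := by
    intro d hd hdS
    have := coeff_eq_zero hind _ h0 d hd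
    rw [if_neg hdS, sub_zero] at this
    exact_mod_cast this
  refine (natClosure_iff S x).mpr ⟨f, ?_⟩
  rw [hf, ← Finset.sum_subset hS (fun d hd hdS => by simp [hz d hd hdS])]

end AuxHelpers

/-- Let `R` be a reduced irreducible root system with base `Π`, let `S ⊆ Δ`
be connected, and let `ε_S` be the highest root of `R^S = R ∩ ℤS`.  Then
`T = {α ∈ R^S : ⟨α, ε_S^∨⟩ = 0}` is a root system in the subspace it spans (a finite set of
nonzero roots, closed under its own reflections), and `{α ∈ S : ⟨α, ε_S^∨⟩ = 0}` is a base
of `T` (it is linearly independent and every element of `T` is a nonnegative or nonpositive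
integral combination of its elements). -/
theorem orthogonal_of_highest_root_is_root_system
    (P : RootSystemData k V) (Δ : Finset V) (hbase : P.IsBase Δ) (hirr : P.IsConnected Δ)
    (S : Finset V) (hS : S ⊆ Δ) (hconn : P.IsConnected S)
    (ε : V) (hε : P.IsHighestRoot S ε) :
    (∀ α ∈ P.orthPart S ε, ∀ β ∈ P.orthPart S ε,
        β - P.pairInt β α • α ∈ P.orthPart S ε) ∧
    (S.filter fun a => P.pairInt a ε = 0) ⊆ P.orthPart S ε ∧
    LinearIndependent k (fun b : (S.filter fun a => P.pairInt a ε = 0) => (b : V)) ∧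
    (∀ α ∈ P.orthPart S ε,
        α ∈ AddSubmonoid.closure ((S.filter fun a => P.pairInt a ε = 0 : Finset V) : Set V) ∨
        -α ∈ AddSubmonoid.closure ((S.filter fun a => P.pairInt a ε = 0 : Finset V) : Set V)) := by
  classical
  obtain ⟨hεpos, hεhigh⟩ := hε
  rw [RootSystemData.posRootsOf, Finset.mem_filter] at hεpos
  obtain ⟨hεroot, hεN⟩ := hεpos
  have hSroots : ∀ a ∈ S, a ∈ P.roots := fun a ha => hbase.subset (hS ha)
  obtain ⟨fε, hfε⟩ := (natClosure_iff S ε).mp hεN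
  have hεZ : ε ∈ AddSubgroup.closure (S : Set V) := by
    refine (intClosure_iff S ε).mpr ⟨fun v => (fε v : ℤ), ?_⟩
    rw [hfε]
    exact Finset.sum_congr rfl fun s _ => (natCast_zsmul s (fε s)).symm
  have pairk : ∀ x ∈ P.roots, ((P.pairInt x ε : ℤ) : k) = P.corootForm ε x :=
    fun x hx => P.pair_compat ε hεroot x hx
  have negroot : ∀ a ∈ P.roots, -a ∈ P.roots := by
    intro a ha
    have := P.reflect_mem a ha a ha
    rwa [P.pair_self a ha, show a - (2 : ℤ) • a = -a by rw [two_zsmul]; abel] at this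
  -- nonnegativity of ⟨a, ε^∨⟩ for a ∈ S
  have hnonneg : ∀ a ∈ S, 0 ≤ P.pairInt a ε := by
    intro a ha
    by_contra hlt
    push_neg at hlt
    set n := P.pairInt a ε with hn
    have hβroot : a - n • ε ∈ P.roots := P.reflect_mem ε hεroot a (hSroots a ha)
    have hβZ : a - n • ε ∈ AddSubgroup.closure (S : Set V) :=
      sub_mem (AddSubgroup.subset_closure (Finset.mem_coe.mpr ha))
        (AddSubgroup.zsmul_mem _ hεZ n)
    have hβmem : a - n • ε ∈ P.rootsOf S := by
      rw [RootSystemData.rootsOf, Finset.mem_filter]; exact ⟨hβroot, hβZ⟩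
    obtain ⟨g, hg⟩ := (natClosure_iff S _).mp (hεhigh _ hβmem)
    set m : ℕ := (-1 - n).toNat with hm
    have hmz : (m : ℤ) = -1 - n := Int.toNat_of_nonneg (by omega)
    have hzero : ∑ s ∈ S, (g s + (if s = a then 1 else 0) + m * fε s) • s = 0 := by
      have e1 : ∑ s ∈ S, (if s = a then 1 else 0 : ℕ) • s = a := by
        simp [ite_smul, Finset.sum_ite_eq', ha]
      have e2 : ∑ s ∈ S, (m * fε s) • s = m • ε := by
        rw [hfε, Finset.smul_sum]
        exact Finset.sum_congr rfl fun s _ => (mul_smul m (fε s) s)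
      simp only [add_smul, Finset.sum_add_distrib, e1, e2, ← hg]
      have hcast : (m : ℤ) • ε = m • ε := natCast_zsmul ε m
      rw [← hcast, hmz, sub_smul, neg_smul, one_smul]
      abel
    have hfin := nat_coeff_eq_zero hbase.indep hS _ hzero a ha
    rw [if_pos rfl] at hfin
    omega
  -- core: an orthogonal root lying in ℕS lies in ℕS₀
  have core : ∀ β ∈ P.roots, β ∈ AddSubmonoid.closure (S : Set V) → P.pairInt β ε = 0 →
      β ∈ AddSubmonoid.closure ((S.filter fun a => P.pairInt a ε = 0 : Finset V) : Set V) := by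
    intro β hβroot hβN hβ0
    obtain ⟨f, hf⟩ := (natClosure_iff S β).mp hβN
    have hβk : P.corootForm ε β = 0 := by
      rw [← pairk β hβroot, hβ0]; simp
    have hkey : ∑ s ∈ S, (f s : k) * ((P.pairInt s ε : ℤ) : k) = 0 := by
      rw [hf, map_sum] at hβk
      rw [← hβk]
      refine Finset.sum_congr rfl fun s hs => ?_
      rw [map_nsmul, nsmul_eq_mul, pairk s (hSroots s hs)]
    have hsum0 : ∑ s ∈ S, (f s : ℤ) * P.pairInt s ε = 0 := by
      have : ((∑ s ∈ S, (f s : ℤ) * P.pairInt s ε : ℤ) : k) = 0 := by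
        push_cast
        exact hkey
      exact_mod_cast this
    have hterm : ∀ s ∈ S, (f s : ℤ) * P.pairInt s ε = 0 :=
      fun s hs => (Finset.sum_eq_zero_iff_of_nonneg
        (fun s hs => mul_nonneg (Int.natCast_nonneg _) (hnonneg s hs))).mp hsum0 s hs
    refine (natClosure_iff _ β).mpr ⟨f, ?_⟩
    rw [hf]
    refine (Finset.sum_subset (Finset.filter_subset _ _) ?_).symm
    intro s hsS hs0
    have hne : P.pairInt s ε ≠ 0 := fun h => hs0 (Finset.mem_filter.mpr ⟨hsS, h⟩)
    have hf0 : f s = 0 := by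
      rcases mul_eq_zero.mp (hterm s hsS) with h | h
      · exact_mod_cast h
      · exact absurd h hne
    simp [hf0]
  refine ⟨?_, ?_, ?_, ?_⟩
  · -- closure under reflections
    intro α hα β hβ
    simp only [RootSystemData.orthPart, RootSystemData.rootsOf, Finset.mem_filter] at hα hβ ⊢
    obtain ⟨⟨hαr, hαZ⟩, hα0⟩ := hα
    obtain ⟨⟨hβr, hβZ⟩, hβ0⟩ := hβ
    have hγr : β - P.pairInt β α • α ∈ P.roots := P.reflect_mem α hαr β hβr
    have hγZ : β - P.pairInt β α • α ∈ AddSubgroup.closure (S : Set V) :=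
      sub_mem hβZ (AddSubgroup.zsmul_mem _ hαZ _)
    refine ⟨⟨hγr, hγZ⟩, ?_⟩
    have h0 : ((P.pairInt (β - P.pairInt β α • α) ε : ℤ) : k) = 0 := by
      rw [pairk _ hγr, map_sub, map_zsmul, ← pairk β hβr, ← pairk α hαr, hβ0, hα0]
      simp
    exact_mod_cast h0
  · -- S₀ ⊆ T
    intro a ha
    rw [Finset.mem_filter] at ha
    simp only [RootSystemData.orthPart, RootSystemData.rootsOf, Finset.mem_filter]
    exact ⟨⟨hSroots a ha.1, AddSubgroup.subset_closure (Finset.mem_coe.mpr ha.1)⟩, ha.2⟩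
  · -- linear independence
    have hsub : ∀ x ∈ (S.filter fun a => P.pairInt a ε = 0), x ∈ Δ :=
      fun x hx => hS (Finset.mem_filter.mp hx).1
    exact hbase.indep.comp
      (fun x : (S.filter fun a => P.pairInt a ε = 0) => (⟨x.1, hsub x.1 x.2⟩ : Δ))
      (fun x y hxy => by
        apply Subtype.ext
        simpa using hxy)
  · -- positivity / negativity
    intro α hα
    simp only [RootSystemData.orthPart, RootSystemData.rootsOf, Finset.mem_filter] at hα
    obtain ⟨⟨hαr, hαZ⟩, hα0⟩ := hα
    rcases hbase.pos_or_neg α hαr with hpos | hneg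
    · exact Or.inl (core α hαr (sep_closure hbase.indep hS hpos hαZ) hα0)
    · have hnr : -α ∈ P.roots := negroot α hαr
      have hnZ : -α ∈ AddSubgroup.closure (S : Set V) := neg_mem hαZ
      have hn0 : P.pairInt (-α) ε = 0 := by
        have h0 : ((P.pairInt (-α) ε : ℤ) : k) = 0 := by
          rw [pairk _ hnr, map_neg, ← pairk α hαr, hα0]
          simp
        exact_mod_cast h0
      exact Or.inr (core (-α) hnr (sep_closure hbase.indep hS hneg hnZ) hn0)
end

section
/- Let R be a reduced root system with base Π, and let S ⊆ Π. If K, K' ∈ 𝒦(S), then either K ⊆ K', or K' ⊆ K, or K and K' are disjoint subsets of S such that α + β ∉ R for every α ∈ R^K and β ∈ R^{K'}. -/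
open Finset Module

open scoped Classical

/-!
Cascade members lying in the same connected component `C` of `S` are nested, because the
recursion only descends into subsets of `C`. Members lying in different components `C ≠ C'`
sit on disjoint, mutually orthogonal sets of simple roots, and for roots `α ∈ R^C`,
`β ∈ R^{C'}` this gives `⟨β, α^∨⟩ = 0`. If `α + β` were a root, so would be its reflection
`β - α`. Every root lies in `ℕΔ` or in `-ℕΔ`, and projecting `α + β` and `β - α` onto the
coordinates in `C` and in `C'` then puts `α` or `β` in `ℕΔ ∩ -ℕΔ = 0`.

The data pair roots only with coroots, so orthogonality between a simple root `c ∉ C` and a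
root `α ∈ R^C` has to be shown symmetric: with `p = ⟨c, α^∨⟩`, both `c - pα` and `-c - pα`
are roots, and the same projection puts `pα` in `ℕΔ ∩ -ℕΔ`.
-/

namespace RootSystemData

variable {k V : Type*} [Field k] [CharZero k] [AddCommGroup V] [Module k V]
variable {P : RootSystemData k V}

lemma pairInt_eq_iff {α β : V} (hα : α ∈ P.roots) (hβ : β ∈ P.roots) {n : ℤ} :
    P.pairInt β α = n ↔ P.corootForm α β = n := by
  rw [← P.pair_compat α hα β hβ, Int.cast_inj]

lemma pairInt_eq_zero_iff {α β : V} (hα : α ∈ P.roots) (hβ : β ∈ P.roots) :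
    P.pairInt β α = 0 ↔ P.corootForm α β = 0 := by
  simpa using pairInt_eq_iff hα hβ (n := 0)

lemma corootForm_self {α : V} (hα : α ∈ P.roots) : P.corootForm α α = 2 := by
  simpa using (pairInt_eq_iff hα hα (n := 2)).mp (P.pair_self α hα)

lemma corootForm_eq_zero_of_mem_closure {α x : V} {C : Finset V}
    (h : ∀ c ∈ C, P.corootForm α c = 0) (hx : x ∈ AddSubgroup.closure (C : Set V)) :
    P.corootForm α x = 0 :=
  (AddSubgroup.closure_le (LinearMap.ker (P.corootForm α)).toAddSubgroup).mpr h hx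

lemma rootsOf_mono {K C : Finset V} (h : K ⊆ C) : P.rootsOf K ⊆ P.rootsOf C := fun α hα => by
  simp only [rootsOf, mem_filter] at hα ⊢
  exact ⟨hα.1, AddSubgroup.closure_mono (coe_subset.mpr h) hα.2⟩

lemma subset_of_mem_components {S C : Finset V} (hC : C ∈ P.components S) : C ⊆ S := by
  obtain ⟨x, -, rfl⟩ := mem_image.mp hC
  exact filter_subset _ _

lemma mem_cascadeAux_succ {n : ℕ} {S K : Finset V} :
    K ∈ P.cascadeAux (n + 1) S ↔
      ∃ C ∈ P.components S, K = C ∨ K ∈ P.cascadeAux n (P.zeroPart C) := by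
  simp [cascadeAux]

lemma subset_of_mem_cascadeAux {n : ℕ} {S K : Finset V} (hK : K ∈ P.cascadeAux n S) :
    K ⊆ S := by
  induction n generalizing S K with
  | zero => simp [cascadeAux] at hK
  | succ n ih =>
    obtain ⟨C, hC, rfl | hK⟩ := mem_cascadeAux_succ.mp hK
    · exact subset_of_mem_components hC
    · exact (ih hK).trans ((filter_subset _ _).trans (subset_of_mem_components hC))

namespace IsBase

variable {Δ : Finset V} (hΔ : P.IsBase Δ)
include hΔ

lemma span_eq_top : Submodule.span k (Δ : Set V) = ⊤ := by
  rw [eq_top_iff, ← P.span_eq_top, Submodule.span_le]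
  intro α hα
  have hcl : AddSubmonoid.closure (Δ : Set V) ≤ (Submodule.span k (Δ : Set V)).toAddSubmonoid :=
    AddSubmonoid.closure_le.mpr Submodule.subset_span
  rcases hΔ.pos_or_neg α hα with h | h
  · exact hcl h
  · simpa using Submodule.neg_mem _ (hcl h)

noncomputable def basis : Basis Δ k V :=
  Basis.mk hΔ.indep (by simpa using hΔ.span_eq_top.ge)

lemma basis_apply (i : Δ) : hΔ.basis i = i :=
  Basis.mk_apply _ _ i

lemma basis_repr_mem_range_natCast {x : V} (hx : x ∈ AddSubmonoid.closure (Δ : Set V))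
    (i : Δ) : hΔ.basis.repr x i ∈ Set.range (Nat.cast : ℕ → k) := by
  induction hx using AddSubmonoid.closure_induction with
  | mem x hx =>
      have hxb : x = hΔ.basis ⟨x, hx⟩ := (hΔ.basis_apply ⟨x, hx⟩).symm
      rw [hxb, Basis.repr_self, Finsupp.single_apply]
      split_ifs
      exacts [⟨1, Nat.cast_one⟩, ⟨0, Nat.cast_zero⟩]
  | zero => exact ⟨0, by simp⟩
  | add x y _ _ hx hy =>
      obtain ⟨m, hm⟩ := hx
      obtain ⟨n, hn⟩ := hy
      exact ⟨m + n, by simp [hm, hn]⟩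

lemma eq_zero_of_mem_closure_of_neg_mem_closure {x : V}
    (hx : x ∈ AddSubmonoid.closure (Δ : Set V)) (hx' : -x ∈ AddSubmonoid.closure (Δ : Set V)) :
    x = 0 := by
  refine hΔ.basis.repr.injective (Finsupp.ext fun i => ?_)
  obtain ⟨m, hm⟩ := hΔ.basis_repr_mem_range_natCast hx i
  obtain ⟨n, hn⟩ := hΔ.basis_repr_mem_range_natCast hx' i
  rw [map_neg, Finsupp.neg_apply, ← hm] at hn
  have hnm : n + m = 0 := by exact_mod_cast (show (n : k) + m = 0 by rw [hn]; ring)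
  simp [← hm, show m = 0 by omega]

lemma neg_notMem_closure {x : V} (hx : x ∈ P.roots) (hxΔ : x ∈ AddSubmonoid.closure (Δ : Set V)) :
    -x ∉ AddSubmonoid.closure (Δ : Set V) :=
  fun h => P.ne_zero x hx (hΔ.eq_zero_of_mem_closure_of_neg_mem_closure hxΔ h)

noncomputable def proj (C : Finset V) : V →ₗ[k] V :=
  hΔ.basis.constr k fun i => if (i : V) ∈ C then (i : V) else 0

lemma proj_apply (C : Finset V) {c : V} (hc : c ∈ Δ) :
    hΔ.proj C c = if c ∈ C then c else 0 := by
  simpa [proj, basis_apply] using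
    hΔ.basis.constr_basis k (fun i : Δ => if (i : V) ∈ C then (i : V) else 0) ⟨c, hc⟩

lemma proj_apply_of_mem_closure {C : Finset V} (hC : C ⊆ Δ) {x : V}
    (hx : x ∈ AddSubgroup.closure (C : Set V)) : hΔ.proj C x = x :=
  (AddSubgroup.closure_le (LinearMap.eqLocus (hΔ.proj C) LinearMap.id).toAddSubgroup).mpr
    (fun c hc => by simp [hΔ.proj_apply C (hC hc), show c ∈ C from hc]) hx

lemma proj_apply_eq_zero {C C' : Finset V} (hC' : C' ⊆ Δ) (hd : Disjoint C C') {x : V}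
    (hx : x ∈ AddSubgroup.closure (C' : Set V)) : hΔ.proj C x = 0 :=
  (AddSubgroup.closure_le (LinearMap.ker (hΔ.proj C)).toAddSubgroup).mpr
    (fun c hc => by simp [hΔ.proj_apply C (hC' hc), disjoint_right.mp hd hc]) hx

lemma proj_mem_closure (C : Finset V) {x : V} (hx : x ∈ AddSubmonoid.closure (Δ : Set V)) :
    hΔ.proj C x ∈ AddSubmonoid.closure (Δ : Set V) := by
  refine (AddSubmonoid.closure_le (S := (AddSubmonoid.closure (Δ : Set V)).comap
    (hΔ.proj C).toAddMonoidHom)).mpr (fun c hc => ?_) hx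
  rw [SetLike.mem_coe, AddSubmonoid.mem_comap, LinearMap.toAddMonoidHom_coe,
    hΔ.proj_apply C hc]
  split_ifs
  exacts [AddSubmonoid.subset_closure hc, zero_mem _]

lemma mem_closure_of_add_mem_closure {C C' : Finset V} (hC : C ⊆ Δ) (hC' : C' ⊆ Δ)
    (hd : Disjoint C C') {x y : V} (hx : x ∈ AddSubgroup.closure (C : Set V))
    (hy : y ∈ AddSubgroup.closure (C' : Set V))
    (hxy : x + y ∈ AddSubmonoid.closure (Δ : Set V)) :
    x ∈ AddSubmonoid.closure (Δ : Set V) ∧ y ∈ AddSubmonoid.closure (Δ : Set V) := by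
  constructor
  · simpa [hΔ.proj_apply_of_mem_closure hC hx, hΔ.proj_apply_eq_zero hC' hd hy] using
      hΔ.proj_mem_closure C hxy
  · simpa [hΔ.proj_apply_of_mem_closure hC' hy, hΔ.proj_apply_eq_zero hC hd.symm hx] using
      hΔ.proj_mem_closure C' hxy

lemma mem_closure_or_neg_mem_closure_of_add_mem_roots {C C' : Finset V} (hC : C ⊆ Δ)
    (hC' : C' ⊆ Δ) (hd : Disjoint C C') {x y : V} (hx : x ∈ AddSubgroup.closure (C : Set V))
    (hy : y ∈ AddSubgroup.closure (C' : Set V)) (hxy : x + y ∈ P.roots) :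
    (x ∈ AddSubmonoid.closure (Δ : Set V) ∧ y ∈ AddSubmonoid.closure (Δ : Set V)) ∨
      (-x ∈ AddSubmonoid.closure (Δ : Set V) ∧ -y ∈ AddSubmonoid.closure (Δ : Set V)) := by
  refine (hΔ.pos_or_neg _ hxy).imp (hΔ.mem_closure_of_add_mem_closure hC hC' hd hx hy)
    fun hneg => ?_
  rw [neg_add] at hneg
  exact hΔ.mem_closure_of_add_mem_closure hC hC' hd (neg_mem hx) (neg_mem hy) hneg

lemma pairInt_eq_zero_comm {C : Finset V} (hC : C ⊆ Δ) {c α : V} (hc : c ∈ Δ) (hcC : c ∉ C)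
    (hα : α ∈ P.rootsOf C) (h : P.pairInt α c = 0) : P.pairInt c α = 0 := by
  obtain ⟨hαR, hαC⟩ := mem_filter.mp hα
  have hcR := hΔ.subset hc
  set p := P.pairInt c α
  have hc_neg := hΔ.neg_notMem_closure hcR (AddSubmonoid.subset_closure hc)
  have hcc : c ∈ AddSubgroup.closure (({c} : Finset V) : Set V) :=
    AddSubgroup.subset_closure (by simp)
  have hpα : -(p • α) ∈ AddSubgroup.closure (C : Set V) := neg_mem (zsmul_mem hαC p)
  have hδ : c + -(p • α) ∈ P.roots := by
    simpa [sub_eq_add_neg] using P.reflect_mem α hαR c hcR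
  have hδc : P.pairInt (c + -(p • α)) c = 2 := by
    rw [pairInt_eq_iff hcR hδ, map_add, map_neg, map_zsmul, corootForm_self hcR,
      (pairInt_eq_zero_iff hcR hαR).mp h]
    simp
  have hη : -c + -(p • α) ∈ P.roots := by
    convert P.reflect_mem c hcR _ hδ using 1
    rw [hδc]
    abel
  have hcΔ : ({c} : Finset V) ⊆ Δ := singleton_subset_iff.mpr hc
  have hcd : Disjoint {c} C := disjoint_singleton_left.mpr hcC
  have hδs := hΔ.mem_closure_or_neg_mem_closure_of_add_mem_roots hcΔ hC hcd hcc hpα hδ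
  have hηs :=
    hΔ.mem_closure_or_neg_mem_closure_of_add_mem_roots hcΔ hC hcd (neg_mem hcc) hpα hη
  simp only [neg_neg] at hδs hηs
  have hpα0 : p • α = 0 := hΔ.eq_zero_of_mem_closure_of_neg_mem_closure
    (hηs.elim (fun h' => absurd h'.1 hc_neg) And.right)
    (hδs.elim And.right fun h' => absurd h'.1 hc_neg)
  rw [← Int.cast_smul_eq_zsmul k] at hpα0
  exact_mod_cast (smul_eq_zero.mp hpα0).resolve_right (P.ne_zero α hαR)

lemma add_notMem_roots {C C' : Finset V} (hC : C ⊆ Δ) (hC' : C' ⊆ Δ) (hd : Disjoint C C')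
    {α β : V} (hα : α ∈ P.rootsOf C) (hβ : β ∈ P.rootsOf C') (h : P.pairInt β α = 0) :
    α + β ∉ P.roots := by
  intro hγ
  obtain ⟨hαR, hαC⟩ := mem_filter.mp hα
  obtain ⟨hβR, hβC⟩ := mem_filter.mp hβ
  have hγα : P.pairInt (α + β) α = 2 := by
    rw [pairInt_eq_iff hαR hγ, map_add, corootForm_self hαR,
      (pairInt_eq_zero_iff hαR hβR).mp h]
    simp
  have hδ : -α + β ∈ P.roots := by
    convert P.reflect_mem α hαR _ hγ using 1
    rw [hγα]
    abel
  have hγs := hΔ.mem_closure_or_neg_mem_closure_of_add_mem_roots hC hC' hd hαC hβC hγ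
  have hδs :=
    hΔ.mem_closure_or_neg_mem_closure_of_add_mem_roots hC hC' hd (neg_mem hαC) hβC hδ
  rw [neg_neg] at hδs
  rcases hγs with ⟨hα₁, hβ₁⟩ | ⟨hα₁, hβ₁⟩ <;> rcases hδs with ⟨hα₂, hβ₂⟩ | ⟨hα₂, hβ₂⟩
  exacts [hΔ.neg_notMem_closure hαR hα₁ hα₂, hΔ.neg_notMem_closure hβR hβ₁ hβ₂,
    hΔ.neg_notMem_closure hβR hβ₂ hβ₁, hΔ.neg_notMem_closure hαR hα₂ hα₁]

lemma pairInt_eq_zero_of_orthogonal {C C' : Finset V} (hC : C ⊆ Δ) (hC' : C' ⊆ Δ)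
    (hd : Disjoint C C') (horth : ∀ a ∈ C, ∀ c ∈ C', P.pairInt a c = 0) {α β : V}
    (hα : α ∈ P.rootsOf C) (hβ : β ∈ P.rootsOf C') : P.pairInt β α = 0 := by
  obtain ⟨hαR, hαC⟩ := mem_filter.mp hα
  obtain ⟨hβR, hβC⟩ := mem_filter.mp hβ
  have hcα : ∀ c ∈ C', P.pairInt c α = 0 := fun c hc => by
    have hcR := hΔ.subset (hC' hc)
    refine hΔ.pairInt_eq_zero_comm hC (hC' hc) (disjoint_right.mp hd hc) hα ?_
    rw [pairInt_eq_zero_iff hcR hαR]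
    exact corootForm_eq_zero_of_mem_closure (fun a ha =>
      (pairInt_eq_zero_iff hcR (hΔ.subset (hC ha))).mp (horth a ha c hc)) hαC
  rw [pairInt_eq_zero_iff hαR hβR]
  exact corootForm_eq_zero_of_mem_closure (fun c hc =>
    (pairInt_eq_zero_iff hαR (hΔ.subset (hC' hc))).mp (hcα c hc)) hβC

lemma linked_symm {S : Finset V} (hS : S ⊆ Δ) {a b : V} (h : P.Linked S a b) :
    P.Linked S b a := by
  have : Std.Symm fun a b => a ∈ S ∧ b ∈ S ∧ P.pairInt a b ≠ 0 := by
    refine ⟨fun a b ⟨ha, hb, hab⟩ => ⟨hb, ha, fun hba => hab ?_⟩⟩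
    rcases eq_or_ne a b with rfl | hne
    · exact hba
    · refine hΔ.pairInt_eq_zero_comm (C := {b}) (singleton_subset_iff.mpr (hS hb)) (hS ha)
        (by simpa using hne) ?_ hba
      simp [rootsOf, hΔ.subset (hS hb)]
  exact Relation.ReflTransGen.stdSymm.symm _ _ h

lemma eq_of_linked_of_mem_components {S C C' : Finset V} (hS : S ⊆ Δ)
    (hC : C ∈ P.components S) (hC' : C' ∈ P.components S) {a c : V} (ha : a ∈ C)
    (hc : c ∈ C') (hac : P.Linked S a c) : C = C' := by
  obtain ⟨x, -, rfl⟩ := mem_image.mp hC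
  obtain ⟨y, -, rfl⟩ := mem_image.mp hC'
  have hxy : P.Linked S x y :=
    ((mem_filter.mp ha).2.trans hac).trans (hΔ.linked_symm hS (mem_filter.mp hc).2)
  ext z
  simp only [component, mem_filter, and_congr_right_iff]
  exact fun _ => ⟨(hΔ.linked_symm hS hxy).trans, hxy.trans⟩

lemma disjoint_of_mem_components {S C C' : Finset V} (hS : S ⊆ Δ) (hC : C ∈ P.components S)
    (hC' : C' ∈ P.components S) (hne : C ≠ C') : Disjoint C C' :=
  disjoint_left.mpr fun _ ha ha' =>
    hne (hΔ.eq_of_linked_of_mem_components hS hC hC' ha ha' .refl)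

lemma pairInt_eq_zero_of_mem_components {S C C' : Finset V} (hS : S ⊆ Δ)
    (hC : C ∈ P.components S) (hC' : C' ∈ P.components S) (hne : C ≠ C') :
    ∀ a ∈ C, ∀ c ∈ C', P.pairInt a c = 0 := fun a ha c hc => by
  by_contra hac
  exact hne (hΔ.eq_of_linked_of_mem_components hS hC hC' ha hc
    (.single ⟨subset_of_mem_components hC ha, subset_of_mem_components hC' hc, hac⟩))

lemma add_notMem_roots_of_mem_components {S C C' : Finset V} (hS : S ⊆ Δ)
    (hC : C ∈ P.components S) (hC' : C' ∈ P.components S) (hne : C ≠ C') {α β : V}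
    (hα : α ∈ P.rootsOf C) (hβ : β ∈ P.rootsOf C') : α + β ∉ P.roots := by
  have hCΔ := (subset_of_mem_components hC).trans hS
  have hC'Δ := (subset_of_mem_components hC').trans hS
  have hd := hΔ.disjoint_of_mem_components hS hC hC' hne
  exact hΔ.add_notMem_roots hCΔ hC'Δ hd hα hβ <| hΔ.pairInt_eq_zero_of_orthogonal hCΔ hC'Δ hd
    (hΔ.pairInt_eq_zero_of_mem_components hS hC hC' hne) hα hβ

theorem cascadeAux_trichotomy (n : ℕ) {S : Finset V} (hS : S ⊆ Δ) {K K' : Finset V}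
    (hK : K ∈ P.cascadeAux n S) (hK' : K' ∈ P.cascadeAux n S) :
    K ⊆ K' ∨ K' ⊆ K ∨
      (Disjoint K K' ∧ K ⊆ S ∧ K' ⊆ S ∧
        ∀ α ∈ P.rootsOf K, ∀ β ∈ P.rootsOf K', α + β ∉ P.roots) := by
  induction n generalizing S K K' with
  | zero => simp [cascadeAux] at hK
  | succ n ih =>
    have hsub : ∀ {K C}, K = C ∨ K ∈ P.cascadeAux n (P.zeroPart C) → K ⊆ C := by
      rintro K C (rfl | hK)
      exacts [subset_rfl, (subset_of_mem_cascadeAux hK).trans (filter_subset _ _)]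
    obtain ⟨C, hC, hKC⟩ := mem_cascadeAux_succ.mp hK
    obtain ⟨C', hC', hK'C'⟩ := mem_cascadeAux_succ.mp hK'
    have hCS := subset_of_mem_components hC
    by_cases hne : C = C'
    · subst hne
      rcases hKC with rfl | hK <;> rcases hK'C' with rfl | hK'
      · exact .inl subset_rfl
      · exact .inr (.inl (hsub (.inr hK')))
      · exact .inl (hsub (.inr hK))
      · have hZ : P.zeroPart C ⊆ S := (filter_subset _ _).trans hCS
        refine (ih (hZ.trans hS) hK hK').imp_right (.imp_right ?_)
        exact fun ⟨hd, hKZ, hK'Z, hroots⟩ => ⟨hd, hKZ.trans hZ, hK'Z.trans hZ, hroots⟩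
    · have hKC := hsub hKC
      have hK'C' := hsub hK'C'
      refine .inr (.inr ⟨(hΔ.disjoint_of_mem_components hS hC hC' hne).mono hKC hK'C',
        hKC.trans hCS, hK'C'.trans (subset_of_mem_components hC'), fun α hα β hβ => ?_⟩)
      exact hΔ.add_notMem_roots_of_mem_components hS hC hC' hne (rootsOf_mono hKC hα)
        (rootsOf_mono hK'C' hβ)

end IsBase
end RootSystemData

variable {k V : Type*} [Field k] [CharZero k] [AddCommGroup V] [Module k V]

/-- Let `R` be a reduced root system with base `Π` and let `S ⊆ Δ`.  If
`K, K' ∈ 𝒦(S)`, then either `K ⊆ K'`, or `K' ⊆ K`, or `K` and `K'` are disjoint subsets of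
`S` such that `α + β ∉ R` for every `α ∈ R^K` and every `β ∈ R^{K'}`. -/
theorem cascade_mem_trichotomy
    (P : RootSystemData k V) (Δ : Finset V) (hbase : P.IsBase Δ)
    (S : Finset V) (hS : S ⊆ Δ)
    (K : Finset V) (hK : K ∈ P.cascade S) (K' : Finset V) (hK' : K' ∈ P.cascade S) :
    K ⊆ K' ∨ K' ⊆ K ∨
      (Disjoint K K' ∧ K ⊆ S ∧ K' ⊆ S ∧
        ∀ α ∈ P.rootsOf K, ∀ β ∈ P.rootsOf K', α + β ∉ P.roots) :=
  hbase.cascadeAux_trichotomy (S.card + 1) hS hK hK'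
end

section
/- Let 𝔤 be a finite-dimensional semisimple Lie algebra over an algebraically closed field k of characteristic 0, let 𝔞 be a Lie subalgebra of 𝔤, and let f ∈ 𝔞*. Suppose that 𝔞^f = {x ∈ 𝔞 : f([x,y]) = 0 for all y ∈ 𝔞} is an abelian Lie subalgebra all of whose elements are semisimple elements of 𝔤 (i.e. ad_𝔤 x is a semisimple endomorphism for every x ∈ 𝔞^f). Then [𝔞, 𝔞^f] ∩ 𝔞^f = {0}. -/
open Module

/-- For a Lie subalgebra `𝔞` of a Lie algebra and a linear form `f ∈ 𝔞*`, the subspace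
`𝔞^f = {x ∈ 𝔞 : f ⁅x, y⁆ = 0 for all y ∈ 𝔞}`. -/
def lieSubFix {k g : Type*} [Field k] [LieRing g] [LieAlgebra k g]
    (a : LieSubalgebra k g) (f : Module.Dual k a) : Submodule k a where
  carrier := {x : a | ∀ y : a, f ⁅x, y⁆ = 0}
  add_mem' := fun hx hy z => by rw [add_lie, map_add, hx z, hy z, add_zero]
  zero_mem' := fun z => by rw [zero_lie, map_zero]
  smul_mem' := fun c x hx z => by rw [smul_lie, map_smul, hx z, smul_zero]

/-- Let `𝔤` be a finite-dimensional semisimple Lie algebra over an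
algebraically closed field `k` of characteristic `0`, let `𝔞` be a Lie subalgebra of `𝔤`,
and let `f ∈ 𝔞*`.  Suppose that `𝔞^f = {x ∈ 𝔞 : f ⁅x, y⁆ = 0 for all y ∈ 𝔞}` is an
abelian Lie subalgebra all of whose elements are semisimple elements of `𝔤` (i.e. `ad_𝔤 x`
is a semisimple endomorphism for every `x ∈ 𝔞^f`).  Then `[𝔞, 𝔞^f] ∩ 𝔞^f = {0}`. -/
theorem bracket_inf_fix_eq_bot_of_abelian_semisimple
    (k g : Type*) [Field k] [IsAlgClosed k] [CharZero k]
    [LieRing g] [LieAlgebra k g] [FiniteDimensional k g] [LieAlgebra.IsSemisimple k g]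
    (a : LieSubalgebra k g) (f : Module.Dual k a)
    (habelian : ∀ x ∈ lieSubFix a f, ∀ y ∈ lieSubFix a f, ⁅x, y⁆ = (0 : a))
    (hss : ∀ x ∈ lieSubFix a f, (LieAlgebra.ad k g (x : g)).IsSemisimple) :
    Submodule.span k {z : a | ∃ x : a, ∃ y ∈ lieSubFix a f, z = ⁅x, y⁆} ⊓ lieSubFix a f = ⊥ := by
  classical
  have hFD : FiniteDimensional k a := by
    have : FiniteDimensional k a.toSubmodule := inferInstance
    exact this
  set p : Submodule k a := lieSubFix a f with hp
  have hmaps : ∀ y : p, ∀ x ∈ a.toSubmodule,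
      LieAlgebra.ad k g ((y : a) : g) x ∈ a.toSubmodule := by
    intro y x hx
    exact a.lie_mem (y : a).2 hx
  let F : p → Module.End k a := fun y =>
    (LieAlgebra.ad k g ((y : a) : g)).restrict (hmaps y)
  have hF : ∀ (y : p) (x : a), F y x = ⁅(y : a), x⁆ := by
    intro y x
    apply Subtype.ext
    rfl
  have hcomm : ∀ i j : p, Commute (F i) (F j) := by
    intro i j
    have hij : ⁅(i : a), (j : a)⁆ = 0 := habelian _ i.2 _ j.2
    ext x
    simp only [Module.End.mul_apply, hF]
    rw [leibniz_lie, hij, zero_lie, zero_add]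
  have hss' : ∀ y : p, (F y).IsSemisimple := fun y => (hss _ y.2).restrict _
  have hker : ∀ y : p, (F y).maxGenEigenspace 0 = LinearMap.ker (F y) := fun y => by
    rw [((hss' y).isFinitelySemisimple).maxGenEigenspace_eq_eigenspace,
      Module.End.eigenspace_zero]
  set W : (p → k) → Submodule k a := fun χ => ⨅ y, (F y).maxGenEigenspace (χ y) with hW
  have htop : ⨆ χ : p → k, W χ = ⊤ :=
    Module.End.iSup_iInf_maxGenEigenspace_eq_top_of_iSup_maxGenEigenspace_eq_top_of_commute F
      (fun i j _ => hcomm i j) (fun y => Module.End.iSup_maxGenEigenspace_eq_top (F y))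
  have hindep : iSupIndep W :=
    Module.End.independent_iInf_maxGenEigenspace_of_forall_mapsTo F
      (fun i j φ => Module.End.mapsTo_maxGenEigenspace_of_comm (hcomm j i) φ)
  have hsub : Submodule.span k {z : a | ∃ x : a, ∃ y ∈ lieSubFix a f, z = ⁅x, y⁆}
      ≤ ⨆ χ, ⨆ _ : χ ≠ (0 : p → k), W χ := by
    rw [Submodule.span_le]
    rintro z ⟨x, y, hy, rfl⟩
    have hle : (⨆ χ : p → k, Submodule.map (F ⟨y, hy⟩) (W χ))
        ≤ ⨆ χ, ⨆ _ : χ ≠ (0 : p → k), W χ := by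
      refine iSup_le fun χ => ?_
      rcases eq_or_ne χ 0 with rfl | hχ
      · rintro w ⟨u, hu, rfl⟩
        have hu0 : u ∈ LinearMap.ker (F ⟨y, hy⟩) := by
          rw [← hker ⟨y, hy⟩]
          simpa using Submodule.mem_iInf _ |>.mp hu ⟨y, hy⟩
        rw [LinearMap.mem_ker] at hu0
        rw [hu0]
        exact Submodule.zero_mem _
      · refine le_trans ?_ (le_iSup₂ (f := fun χ (_ : χ ≠ (0 : p → k)) => W χ) χ hχ)
        rintro w ⟨u, hu, rfl⟩
        refine Submodule.mem_iInf _ |>.mpr fun i => ?_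
        exact Module.End.mapsTo_maxGenEigenspace_of_comm (hcomm i ⟨y, hy⟩) (χ i)
          (Submodule.mem_iInf _ |>.mp hu i)
    have hxmem : x ∈ ⨆ χ : p → k, W χ := htop ▸ Submodule.mem_top
    have hmem : (F ⟨y, hy⟩) x ∈ ⨆ χ : p → k, Submodule.map (F ⟨y, hy⟩) (W χ) := by
      rw [← Submodule.map_iSup]
      exact Submodule.mem_map_of_mem hxmem
    have hbr : ⁅x, y⁆ = -((F ⟨y, hy⟩) x) := by
      rw [hF]
      exact (lie_skew x y).symm
    rw [SetLike.mem_coe, hbr]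
    exact neg_mem (hle hmem)
  rw [eq_bot_iff]
  rintro z hz
  rw [Submodule.mem_inf] at hz
  obtain ⟨hz1, hz2⟩ := hz
  have hz0 : z ∈ W 0 := by
    refine Submodule.mem_iInf _ |>.mpr fun y => ?_
    rw [Pi.zero_apply, hker y, LinearMap.mem_ker, hF]
    exact habelian _ y.2 _ hz2
  have := hindep 0
  rw [Submodule.mem_bot]
  exact Submodule.disjoint_def.mp this z hz0 (hsub hz1)
end
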